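/- Let n ≥ 3, m ≥ 1 and N = nm−m+1. For every vertex x of Γ(D_n,m), σ'(τ̃(x)) = τ^m(σ'(x)), where τ̃ is the translation of Γ(D_n,m) and τ is the translation of Γ(D_N,1). -/
import Mathlib


/-!
Common combinatorial definitions for the translation quivers of
Baur–Marsh, "A geometric description of the m-cluster categories of type Dₙ".

* `DLab` is the type of second coordinates of vertices of a type-`D` translation
  quiver: `DLab.z false` is the label `0`, `DLab.z true` is the label `0̄`, and
  `DLab.pos j` is the (unbarred) label `j ≥ 1`.
* `DVertex N h` is the vertex set `ℤ/N × {0, 0̄, 1, …, h−2}`.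
* `DArrow N h` is the arrow relation of the translation quiver with `N` columns
  and labels `0, 0̄, 1, …, h−2`.
* `DTau N c` is the translation: `(i,j) ↦ (i−1, j̄)` when `i = 0`, `j ∈ {0,0̄}` and
  `c` is odd, and `(i,j) ↦ (i−1,j)` otherwise.

With these conventions, `Γ(D_N, 1)` is `(DVertex N N, DArrow N N, DTau N N)`
and `Γ(D_n, m)` is
`(DVertex (n*m−m+1) n, DArrow (n*m−m+1) n, DTau (n*m−m+1) (n*m))`.
-/

/-- Labels `0` (= `z false`), `0̄` (= `z true`) and `j ≥ 1` (= `pos j`). -/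
inductive DLab : Type
  | z : Bool → DLab
  | pos : ℕ → DLab
deriving DecidableEq

/-- The bar operation on labels: swaps `0` and `0̄`, fixes all other labels. -/
def DLab.bar : DLab → DLab
  | .z b => .z (!b)
  | .pos j => .pos j

/-- The vertex set `ℤ/N × {0, 0̄, 1, …, h−2}`. -/
def DVertex (N h : ℕ) : Set (ZMod N × DLab) :=
  {v | ∀ j : ℕ, v.2 = DLab.pos j → 1 ≤ j ∧ j ≤ h - 2}

/-- The arrows `(i,j) → (i,j−1)` and `(i,j−1) → (i+1,j)` for `1 ≤ j ≤ h−2`,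
together with `(i,1) → (i,0̄)` and `(i,0̄) → (i+1,1)`. -/
inductive DArrow (N h : ℕ) : ZMod N × DLab → ZMod N × DLab → Prop
  | down (i : ZMod N) (j : ℕ) (h1 : 2 ≤ j) (h2 : j ≤ h - 2) :
      DArrow N h (i, DLab.pos j) (i, DLab.pos (j - 1))
  | toZ (i : ZMod N) (b : Bool) :
      DArrow N h (i, DLab.pos 1) (i, DLab.z b)
  | fromZ (i : ZMod N) (b : Bool) :
      DArrow N h (i, DLab.z b) (i + 1, DLab.pos 1)
  | up (i : ZMod N) (j : ℕ) (h1 : 1 ≤ j) (h2 : j + 1 ≤ h - 2) :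
      DArrow N h (i, DLab.pos j) (i + 1, DLab.pos (j + 1))

/-- The translation `τ(i,j) = (i−1, j̄)` if `i = 0`, `j ∈ {0,0̄}` and `c` is odd,
and `τ(i,j) = (i−1, j)` otherwise.  For `Γ(D_N,1)` one takes `c = N`; for
`Γ(D_n,m)` one takes `c = n*m` (and `N = n*m−m+1`). -/
def DTau (N c : ℕ) : ZMod N × DLab → ZMod N × DLab := fun v =>
  match v with
  | (i, DLab.z b) =>
      if i = 0 ∧ c % 2 = 1 then (i - 1, DLab.z (!b)) else (i - 1, DLab.z b)
  | (i, DLab.pos j) => (i - 1, DLab.pos j)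

/-- `p 0 → p 1 → ⋯ → p m` is a path in `Γ(D_N,1)`. -/
def IsPath (N m : ℕ) (p : ℕ → ZMod N × DLab) : Prop :=
  ∀ k, k < m → DArrow N N (p k) (p (k + 1))

/-- `p 0 → p 1 → ⋯ → p m` is a sectional path in `Γ(D_N,1)`:
`τ (p (k+1)) ≠ p (k−1)` for `1 ≤ k ≤ m − 1`. -/
def IsSectional (N m : ℕ) (p : ℕ → ZMod N × DLab) : Prop :=
  IsPath N m p ∧ ∀ k, 1 ≤ k → k + 1 ≤ m → DTau N N (p (k + 1)) ≠ p (k - 1)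

/-- The extra condition defining restricted paths: there is no `1 ≤ k ≤ m−1`
such that for some `r`, `p (k+1) = (r, 0)` and `p (k−1) = (r−1, 0̄)`, or
`p (k+1) = (r, 0̄)` and `p (k−1) = (r−1, 0)`. -/
def NoForbidden (N m : ℕ) (p : ℕ → ZMod N × DLab) : Prop :=
  ¬ ∃ k, 1 ≤ k ∧ k + 1 ≤ m ∧ ∃ r : ZMod N,
      ((p (k + 1) = (r, DLab.z false) ∧ p (k - 1) = (r - 1, DLab.z true)) ∨
       (p (k + 1) = (r, DLab.z true) ∧ p (k - 1) = (r - 1, DLab.z false)))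

/-- `p 0 → p 1 → ⋯ → p m` is a restricted sectional path in `Γ(D_N,1)`. -/
def IsRestricted (N m : ℕ) (p : ℕ → ZMod N × DLab) : Prop :=
  IsSectional N m p ∧ NoForbidden N m p

/-- There is a restricted sectional path of length `m` from `x` to `y` in
`Γ(D_N,1)`; these are exactly the arrows `x → y` of the restricted `m`-th power
`μ_m(Γ(D_N,1))`. -/
def RSPath (N m : ℕ) (x y : ZMod N × DLab) : Prop :=
  ∃ p : ℕ → ZMod N × DLab, IsRestricted N m p ∧ p 0 = x ∧ p m = y

/-- The set `V = {(r,s) : s ∈ {0,0̄} or m ∣ s}` inside the vertex set of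
`Γ(D_N,1)`. -/
def VSet (N m : ℕ) : Set (ZMod N × DLab) :=
  {v | v ∈ DVertex N N ∧ ∀ j : ℕ, v.2 = DLab.pos j → m ∣ j}

/-- The map `σ'` from the vertex set of `Γ(D_n,m)` to the vertex set of
`Γ(D_N,1)`, where `N = n*m−m+1`:  `σ'(i,j) = (i*m, j*m)` if `j ∉ {0,0̄}`, or if
`j ∈ {0,0̄}`, `m` is odd and `n` is even; otherwise, with `i.val` the standard
representative of `i`, `σ'(i,j) = (i*m, j*m)` if `⌊i*m/N⌋` is even and
`σ'(i,j) = (i*m, (j̄)*m)` if `⌊i*m/N⌋` is odd (with the conventions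
`0*m = 0` and `0̄*m = 0̄`). -/
def DSigma (n m : ℕ) : ZMod (n * m - m + 1) × DLab → ZMod (n * m - m + 1) × DLab :=
  fun v =>
    match v with
    | (i, DLab.pos j) => (i * (m : ZMod (n * m - m + 1)), DLab.pos (j * m))
    | (i, DLab.z b) =>
        if m % 2 = 1 ∧ n % 2 = 0 then
          (i * (m : ZMod (n * m - m + 1)), DLab.z b)
        else if (i.val * m) / (n * m - m + 1) % 2 = 0 then
          (i * (m : ZMod (n * m - m + 1)), DLab.z b)
        else
          (i * (m : ZMod (n * m - m + 1)), DLab.z (!b))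

/-- `C` is a connected component of the quiver with arrow relation `A`:
it is nonempty, closed under arrows in both directions, and any two of its
vertices are connected by an unoriented path. -/
def IsConnComponent {α : Type*} (A : α → α → Prop) (C : Set α) : Prop :=
  C.Nonempty ∧ (∀ x ∈ C, ∀ y, (A x y ∨ A y x) → y ∈ C) ∧
    ∀ x ∈ C, ∀ y ∈ C, Relation.ReflTransGen (fun a b => A a b ∨ A b a) x y

/-- The set `X_k = {(i, j) : j ∈ {k, m+k, …, (n−2)m+k}}`. -/
def XSet (N n m k : ℕ) : Set (ZMod N × DLab) :=
  {v | ∃ (i : ZMod N) (l : ℕ), l ≤ n - 2 ∧ v = (i, DLab.pos (l * m + k))}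

/-- Vertex set `ℤ/N × {1, …, h}` of the translation quiver `Γ(A_h, N)`
(the Auslander–Reiten quiver of `D^b(A_h)/τ^N`). -/
def AVertex (N h : ℕ) : Set (ZMod N × ℕ) :=
  {v | 1 ≤ v.2 ∧ v.2 ≤ h}

/-- Arrows of `Γ(A_h, N)`: `(i,j) → (i,j−1)` for `2 ≤ j ≤ h` and
`(i,j) → (i+1,j+1)` for `1 ≤ j ≤ h−1`. -/
inductive AArrow (N h : ℕ) : ZMod N × ℕ → ZMod N × ℕ → Prop
  | down (i : ZMod N) (j : ℕ) (h1 : 2 ≤ j) (h2 : j ≤ h) :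
      AArrow N h (i, j) (i, j - 1)
  | up (i : ZMod N) (j : ℕ) (h1 : 1 ≤ j) (h2 : j + 1 ≤ h) :
      AArrow N h (i, j) (i + 1, j + 1)

/-- Translation of `Γ(A_h, N)`: `(i,j) ↦ (i−1, j)`. -/
def ATau (N : ℕ) (v : ZMod N × ℕ) : ZMod N × ℕ := (v.1 - 1, v.2)

/-- Tagged arcs in the punctured `N`-gon: `TArc.arc i k` is the arc
`D_{i, i+1+k*m}` (for `1 ≤ k ≤ n−2`), and `TArc.tag i b` is the tagged arc
`D_{ii}^+` (for `b = false`) or `D_{ii}^-` (for `b = true`). -/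
inductive TArc (N : ℕ) : Type
  | arc : ZMod N → ℕ → TArc N
  | tag : ZMod N → Bool → TArc N

/-- The set of tagged `m`-arcs: arcs `D_{i,i+1+k*m}` with `1 ≤ k ≤ n−2`
together with all tagged arcs `D_{ii}^±`. -/
def TArcSet (N n : ℕ) : Set (TArc N) :=
  {a | ∀ (i : ZMod N) (k : ℕ), a = TArc.arc i k → 1 ≤ k ∧ k ≤ n - 2}

/-- The `m`-moves between tagged `m`-arcs, i.e. the arrows of `Γ_⊙(n,m)`:
`D_{i,i+1+km} → D_{i,i+1+(k+1)m}` for `1 ≤ k ≤ n−3`;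
`D_{i,i+1+km} → D_{i+m,i+1+km} = D_{i+m,(i+m)+1+(k−1)m}` for `2 ≤ k ≤ n−2`;
`D_{i,i+1+(n−2)m} → D_{ii}^±`; and
`D_{ii}^± → D_{i+m,i} = D_{i+m,(i+m)+1+(n−2)m}`. -/
inductive MMove (N n m : ℕ) : TArc N → TArc N → Prop
  | extend (i : ZMod N) (k : ℕ) (h1 : 1 ≤ k) (h2 : k ≤ n - 3) :
      MMove N n m (TArc.arc i k) (TArc.arc i (k + 1))
  | rotate (i : ZMod N) (k : ℕ) (h1 : 2 ≤ k) (h2 : k ≤ n - 2) :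
      MMove N n m (TArc.arc i k) (TArc.arc (i + (m : ZMod N)) (k - 1))
  | toTag (i : ZMod N) (b : Bool) :
      MMove N n m (TArc.arc i (n - 2)) (TArc.tag i b)
  | fromTag (i : ZMod N) (b : Bool) :
      MMove N n m (TArc.tag i b) (TArc.arc (i + (m : ZMod N)) (n - 2))

/-- The map `τ_m` on tagged `m`-arcs: `D_{i,i+1+km} ↦ D_{i−m,(i−m)+1+km}` and
`D_{ii}^± ↦ D_{i−m,i−m}^±` if `m` is even, `D_{ii}^± ↦ D_{i−m,i−m}^∓` if `m`
is odd. -/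
def TauArc (N m : ℕ) : TArc N → TArc N
  | .arc i k => .arc (i - (m : ZMod N)) k
  | .tag i b => .tag (i - (m : ZMod N)) (if m % 2 = 1 then !b else b)


section SigmaIntertwineAux

private lemma zmod_cast_val {N : ℕ} [NeZero N] (i : ZMod N) :
    ((i.val : ℕ) : ZMod N) = i := by
  rw [ZMod.natCast_val, ZMod.cast_id]

private lemma zmod_val_sub_one {N : ℕ} [NeZero N] (i : ZMod N) (hi : i ≠ 0) :
    (i - 1).val = i.val - 1 := by
  have h1 : 1 ≤ i.val := Nat.pos_of_ne_zero (fun h => hi ((ZMod.val_eq_zero i).mp h))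
  have h2 : i - 1 = ((i.val - 1 : ℕ) : ZMod N) := by
    rw [Nat.cast_sub h1, Nat.cast_one, zmod_cast_val]
  rw [h2, ZMod.val_natCast, Nat.mod_eq_of_lt]
  exact lt_of_le_of_lt (Nat.sub_le _ _) (ZMod.val_lt i)

private lemma zmod_val_neg_one {N : ℕ} [NeZero N] (hN : 1 < N) :
    (-1 : ZMod N).val = N - 1 := by
  have h : ((N - 1 : ℕ) : ZMod N) = -1 := by
    rw [Nat.cast_sub (by omega : 1 ≤ N), ZMod.natCast_self, Nat.cast_one, zero_sub]
  rw [← h, ZMod.val_natCast, Nat.mod_eq_of_lt (by omega)]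

private lemma dtau_pos_iter (N c k : ℕ) (i : ZMod N) (j : ℕ) :
    (DTau N c)^[k] (i, DLab.pos j) = (i - (k : ZMod N), DLab.pos j) := by
  induction k generalizing i with
  | zero => simp
  | succ k ih =>
      rw [Function.iterate_succ_apply]
      have h1 : DTau N c (i, DLab.pos j) = (i - 1, DLab.pos j) := rfl
      rw [h1, ih]
      have h2 : i - 1 - (k : ZMod N) = i - ((k + 1 : ℕ) : ZMod N) := by
        push_cast; ring
      rw [h2]

private lemma dtau_z_even (N c k : ℕ) (hc : c % 2 = 0) (i : ZMod N) (b : Bool) :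
    (DTau N c)^[k] (i, DLab.z b) = (i - (k : ZMod N), DLab.z b) := by
  induction k generalizing i with
  | zero => simp
  | succ k ih =>
      rw [Function.iterate_succ_apply]
      have h1 : DTau N c (i, DLab.z b) = (i - 1, DLab.z b) := by
        simp [DTau, hc]
      rw [h1, ih]
      have h2 : i - 1 - (k : ZMod N) = i - ((k + 1 : ℕ) : ZMod N) := by
        push_cast; ring
      rw [h2]

private lemma dtau_z_noflip (N c : ℕ) [NeZero N] (k : ℕ) (i : ZMod N) (b : Bool)
    (hk : k ≤ i.val) :
    (DTau N c)^[k] (i, DLab.z b) = (i - (k : ZMod N), DLab.z b) := by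
  induction k generalizing i with
  | zero => simp
  | succ k ih =>
      have hi : i ≠ 0 := by
        intro h
        rw [h] at hk
        simp [ZMod.val_zero] at hk
      rw [Function.iterate_succ_apply]
      have h1 : DTau N c (i, DLab.z b) = (i - 1, DLab.z b) := by
        simp [DTau, hi]
      rw [h1, ih _ (by rw [zmod_val_sub_one i hi]; omega)]
      have h2 : i - 1 - (k : ZMod N) = i - ((k + 1 : ℕ) : ZMod N) := by
        push_cast; ring
      rw [h2]

private lemma dtau_z_flip (N m : ℕ) [NeZero N] (hN2 : N % 2 = 1) (hmN : m < N)
    (y : ZMod N) (b : Bool) (hy : y.val < m) :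
    (DTau N N)^[m] (y, DLab.z b) = (y - (m : ZMod N), DLab.z (!b)) := by
  have hm1 : 1 ≤ m := by omega
  have hN1 : 1 < N := by omega
  have h1 : m = (m - y.val - 1) + 1 + y.val := by omega
  rw [h1, Function.iterate_add_apply, Function.iterate_add_apply]
  have h2 : (DTau N N)^[y.val] (y, DLab.z b) = (0, DLab.z b) := by
    rw [dtau_z_noflip N N y.val y b le_rfl, zmod_cast_val, sub_self]
  rw [h2]
  have h3 : (DTau N N)^[1] ((0 : ZMod N), DLab.z b) = (-1, DLab.z (!b)) := by
    simp [DTau, hN2]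
  rw [h3]
  have h4 : (-1 : ZMod N).val = N - 1 := zmod_val_neg_one hN1
  rw [dtau_z_noflip N N (m - y.val - 1) (-1) (!b) (by rw [h4]; omega)]
  have h5 : ((y.val : ℕ) : ZMod N) = y := zmod_cast_val y
  have h6 : (-1 : ZMod N) - ((m - y.val - 1 : ℕ) : ZMod N) = y - (m : ZMod N) := by
    rw [Nat.cast_sub (by omega : 1 ≤ m - y.val), Nat.cast_sub (by omega : y.val ≤ m),
      Nat.cast_one, h5]
    ring
  rw [h6, ← h1]

private lemma div_sub_small {x m N : ℕ} (hmN : m < N) (hm : m ≤ x) (hr : x % N < m) :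
    x / N = (x - m) / N + 1 := by
  have h0 : 0 < N := by omega
  have hd := Nat.div_add_mod x N
  have hNx : N ≤ x := by
    by_contra h
    rw [Nat.mod_eq_of_lt (by omega)] at hr
    omega
  have hq : 1 ≤ x / N := (Nat.one_le_div_iff h0).mpr hNx
  obtain ⟨q', hq'⟩ : ∃ q', x / N = q' + 1 := ⟨x / N - 1, by omega⟩
  rw [hq', Nat.mul_succ] at hd
  rw [hq']
  have hlt : x % N < N := Nat.mod_lt x h0
  obtain ⟨t, ht⟩ : ∃ t, N * q' = t := ⟨_, by trivial⟩
  rw [ht] at hd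
  have hdiv : (x - m) / N = q' := by
    apply Nat.div_eq_of_lt_le
    · rw [mul_comm, ht]; omega
    · rw [add_mul, one_mul, mul_comm, ht]; omega
  rw [hdiv]

private lemma div_sub_big {x m N : ℕ} (h0 : 0 < N) (hr : m ≤ x % N) :
    (x - m) / N = x / N := by
  have hd := Nat.div_add_mod x N
  have hlt : x % N < N := Nat.mod_lt x h0
  obtain ⟨t, ht⟩ : ∃ t, N * (x / N) = t := ⟨_, by trivial⟩
  rw [ht] at hd
  apply Nat.div_eq_of_lt_le
  · rw [mul_comm, ht]; omega
  · rw [add_mul, one_mul, mul_comm, ht]; omega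

private lemma div_last {m N : ℕ} (hm : 1 ≤ m) (hmN : m < N) :
    (N - 1) * m / N = m - 1 := by
  have h0 : 0 < N := by omega
  apply Nat.div_eq_of_lt_le
  · calc (m - 1) * N = m * N - N := by rw [Nat.sub_mul, one_mul]
      _ ≤ m * N - m := Nat.sub_le_sub_left (le_of_lt hmN) _
      _ = (N - 1) * m := by rw [Nat.sub_one_mul, mul_comm]
  · have hm1 : m - 1 + 1 = m := by omega
    rw [hm1, Nat.sub_one_mul, mul_comm m N]
    exact Nat.sub_lt (Nat.mul_pos h0 (by omega)) hm

end SigmaIntertwineAux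

/-- For `n ≥ 3`, `m ≥ 1` and `N = n*m−m+1`: for every vertex
`x` of `Γ(D_n,m)`, `σ'(τ̃ x) = τ^m (σ' x)`, where `τ̃` is the translation of
`Γ(D_n,m)` and `τ` is the translation of `Γ(D_N,1)`. -/
theorem sigma_intertwines_translations (n m : ℕ) (hn : 3 ≤ n) (hm : 1 ≤ m)
    (x : ZMod (n * m - m + 1) × DLab) (hx : x ∈ DVertex (n * m - m + 1) n) :
    DSigma n m (DTau (n * m - m + 1) (n * m) x) =
      (DTau (n * m - m + 1) (n * m - m + 1))^[m] (DSigma n m x) := by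
  have hNeq : n * m - m + 1 = (n - 1) * m + 1 := by
    rw [Nat.sub_one_mul]
  have h3m : 3 * m ≤ n * m := Nat.mul_le_mul_right m hn
  have hmN : m < n * m - m + 1 := by
    obtain ⟨t, ht⟩ : ∃ t, n * m = t := ⟨_, by trivial⟩
    rw [ht] at h3m ⊢
    omega
  obtain ⟨i, l⟩ := x
  cases l with
  | pos j =>
      have h1 : DSigma n m (DTau (n * m - m + 1) (n * m) (i, DLab.pos j))
          = ((i - 1) * (m : ZMod (n * m - m + 1)), DLab.pos (j * m)) := rfl
      have h2 : DSigma n m (i, DLab.pos j)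
          = (i * (m : ZMod (n * m - m + 1)), DLab.pos (j * m)) := rfl
      rw [h1, h2, dtau_pos_iter]
      simp only [Prod.mk.injEq]
      exact ⟨by ring, by trivial⟩
  | z b =>
      by_cases hA : m % 2 = 1 ∧ n % 2 = 0
      · -- m odd, n even : N even, no flips anywhere
        have hnm : (n * m) % 2 = 0 := by
          rw [Nat.mul_mod, hA.2]
          simp
        have hN2 : (n * m - m + 1) % 2 = 0 := by
          have e1 : (n - 1) % 2 = 1 := by omega
          have e2 : ((n - 1) * m) % 2 = 1 := by
            rw [Nat.mul_mod, e1, hA.1]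
          obtain ⟨s, hs⟩ : ∃ s, (n - 1) * m = s := ⟨_, by trivial⟩
          rw [hs] at e2
          rw [hNeq, hs]
          omega
        have hL : DTau (n * m - m + 1) (n * m) (i, DLab.z b) = (i - 1, DLab.z b) := by
          simp [DTau, hnm]
        have hS : DSigma n m (i, DLab.z b)
            = (i * (m : ZMod (n * m - m + 1)), DLab.z b) := by
          simp [DSigma, hA.1, hA.2]
        have hS2 : DSigma n m (i - 1, DLab.z b)
            = ((i - 1) * (m : ZMod (n * m - m + 1)), DLab.z b) := by
          simp [DSigma, hA.1, hA.2]
        rw [hL, hS, hS2, dtau_z_even _ _ m hN2]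
        simp only [Prod.mk.injEq]
        exact ⟨by ring, by trivial⟩
      · -- case B : N odd
        have hN2 : (n * m - m + 1) % 2 = 1 := by
          have e2 : ((n - 1) * m) % 2 = 0 := by
            by_cases hm2 : m % 2 = 0
            · rw [Nat.mul_mod, hm2]
              simp
            · have hm2' : m % 2 = 1 := by omega
              have hn2 : n % 2 = 1 := by
                by_contra h
                exact hA ⟨hm2', by omega⟩
              have e1 : (n - 1) % 2 = 0 := by omega
              rw [Nat.mul_mod, e1]
              simp
          obtain ⟨s, hs⟩ : ∃ s, (n - 1) * m = s := ⟨_, by trivial⟩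
          rw [hs] at e2
          rw [hNeq, hs]
          omega
        have hyval : (i * (m : ZMod (n * m - m + 1))).val = (i.val * m) % (n * m - m + 1) := by
          rw [show i * (m : ZMod (n * m - m + 1)) = ((i.val * m : ℕ) : ZMod (n * m - m + 1)) by
            rw [Nat.cast_mul, zmod_cast_val], ZMod.val_natCast]
        by_cases hi : i = 0
        · subst hi
          have hS : DSigma n m ((0 : ZMod (n * m - m + 1)), DLab.z b)
              = ((0 : ZMod (n * m - m + 1)) * (m : ZMod (n * m - m + 1)), DLab.z b) := by
            simp [DSigma, hA]
          have hflip := dtau_z_flip (n * m - m + 1) m hN2 hmN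
            ((0 : ZMod (n * m - m + 1)) * (m : ZMod (n * m - m + 1))) b
            (by rw [hyval]; simp; omega)
          rw [hS, hflip]
          have hneg : (-1 : ZMod (n * m - m + 1)).val = n * m - m := by
            simpa using zmod_val_neg_one (N := n * m - m + 1) (by omega)
          have hdiv : ((n * m - m) * m) / (n * m - m + 1) = m - 1 := by
            simpa using div_last hm hmN
          by_cases hnm : (n * m) % 2 = 1
          · have hL : DTau (n * m - m + 1) (n * m) ((0 : ZMod (n * m - m + 1)), DLab.z b)
                = (-1, DLab.z (!b)) := by
              simp [DTau, hnm, zero_sub]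
            have hm2 : m % 2 = 1 := by
              by_contra h
              have hm0 : m % 2 = 0 := by omega
              rw [Nat.mul_mod, hm0] at hnm
              simp at hnm
            have hpar : (m - 1) % 2 = 0 := by omega
            have hS2 : DSigma n m ((-1 : ZMod (n * m - m + 1)), DLab.z (!b))
                = ((-1 : ZMod (n * m - m + 1)) * (m : ZMod (n * m - m + 1)), DLab.z (!b)) := by
              simp [DSigma, hA, hneg, hdiv, hpar]
            rw [hL, hS2]
            simp only [Prod.mk.injEq]
            exact ⟨by ring, by trivial⟩
          · have hL : DTau (n * m - m + 1) (n * m) ((0 : ZMod (n * m - m + 1)), DLab.z b)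
                = (-1, DLab.z b) := by
              simp [DTau, hnm, zero_sub]
            have hm2 : m % 2 = 0 := by
              by_contra h
              have hm2' : m % 2 = 1 := by omega
              have hn2 : n % 2 = 1 := by
                by_contra h2
                exact hA ⟨hm2', by omega⟩
              rw [Nat.mul_mod, hn2, hm2'] at hnm
              simp at hnm
            have hpar : ¬ ((m - 1) % 2 = 0) := by omega
            have hS2 : DSigma n m ((-1 : ZMod (n * m - m + 1)), DLab.z b)
                = ((-1 : ZMod (n * m - m + 1)) * (m : ZMod (n * m - m + 1)), DLab.z (!b)) := by
              simp [DSigma, hA, hneg, hdiv, hpar]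
            rw [hL, hS2]
            simp only [Prod.mk.injEq]
            exact ⟨by ring, by trivial⟩
        · -- i ≠ 0
          have hL : DTau (n * m - m + 1) (n * m) (i, DLab.z b) = (i - 1, DLab.z b) := by
            simp [DTau, hi]
          rw [hL]
          have hvi : 1 ≤ i.val := Nat.pos_of_ne_zero (fun h => hi ((ZMod.val_eq_zero i).mp h))
          have hv1 : (i - 1).val = i.val - 1 := zmod_val_sub_one i hi
          have hmx : m ≤ i.val * m := Nat.le_mul_of_pos_left m hvi
          by_cases hr : (i.val * m) % (n * m - m + 1) < m
          · have hqq : (i.val * m) / (n * m - m + 1)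
                = ((i.val - 1) * m) / (n * m - m + 1) + 1 := by
              rw [Nat.sub_one_mul]
              exact div_sub_small hmN hmx hr
            have hflip := dtau_z_flip (n * m - m + 1) m hN2 hmN
              (i * (m : ZMod (n * m - m + 1)))
            by_cases hq2 : (i.val * m) / (n * m - m + 1) % 2 = 0
            · have hq2' : ¬ (((i.val - 1) * m) / (n * m - m + 1) % 2 = 0) := by
                obtain ⟨q, hq⟩ : ∃ q, ((i.val - 1) * m) / (n * m - m + 1) = q := ⟨_, by trivial⟩
                rw [hq] at hqq ⊢
                rw [hqq] at hq2
                omega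
              have hS1 : DSigma n m (i, DLab.z b)
                  = (i * (m : ZMod (n * m - m + 1)), DLab.z b) := by
                simp [DSigma, hA, hq2]
              have hS2 : DSigma n m (i - 1, DLab.z b)
                  = ((i - 1) * (m : ZMod (n * m - m + 1)), DLab.z (!b)) := by
                simp [DSigma, hA, hv1, hq2']
              rw [hS1, hS2, hflip b (by rw [hyval]; exact hr)]
              simp only [Prod.mk.injEq]
              exact ⟨by ring, by trivial⟩
            · have hq2' : ((i.val - 1) * m) / (n * m - m + 1) % 2 = 0 := by
                obtain ⟨q, hq⟩ : ∃ q, ((i.val - 1) * m) / (n * m - m + 1) = q := ⟨_, by trivial⟩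
                rw [hq] at hqq ⊢
                rw [hqq] at hq2
                omega
              have hS1 : DSigma n m (i, DLab.z b)
                  = (i * (m : ZMod (n * m - m + 1)), DLab.z (!b)) := by
                simp [DSigma, hA, hq2]
              have hS2 : DSigma n m (i - 1, DLab.z b)
                  = ((i - 1) * (m : ZMod (n * m - m + 1)), DLab.z b) := by
                simp [DSigma, hA, hv1, hq2']
              rw [hS1, hS2, hflip (!b) (by rw [hyval]; exact hr)]
              simp only [Prod.mk.injEq, Bool.not_not]
              exact ⟨by ring, by trivial⟩
          · have hrr : m ≤ (i.val * m) % (n * m - m + 1) := by omega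
            have hqq : ((i.val - 1) * m) / (n * m - m + 1)
                = (i.val * m) / (n * m - m + 1) := by
              rw [Nat.sub_one_mul]
              exact div_sub_big (by omega) hrr
            have hnoflip := dtau_z_noflip (n * m - m + 1) (n * m - m + 1) m
              (i * (m : ZMod (n * m - m + 1)))
            by_cases hq2 : (i.val * m) / (n * m - m + 1) % 2 = 0
            · have hq2' : ((i.val - 1) * m) / (n * m - m + 1) % 2 = 0 := by
                rw [hqq]; exact hq2
              have hS1 : DSigma n m (i, DLab.z b)
                  = (i * (m : ZMod (n * m - m + 1)), DLab.z b) := by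
                simp [DSigma, hA, hq2]
              have hS2 : DSigma n m (i - 1, DLab.z b)
                  = ((i - 1) * (m : ZMod (n * m - m + 1)), DLab.z b) := by
                simp [DSigma, hA, hv1, hq2']
              rw [hS1, hS2, hnoflip b (by rw [hyval]; omega)]
              simp only [Prod.mk.injEq]
              exact ⟨by ring, by trivial⟩
            · have hq2' : ¬ (((i.val - 1) * m) / (n * m - m + 1) % 2 = 0) := by
                rw [hqq]; exact hq2
              have hS1 : DSigma n m (i, DLab.z b)
                  = (i * (m : ZMod (n * m - m + 1)), DLab.z (!b)) := by
                simp [DSigma, hA, hq2]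
              have hS2 : DSigma n m (i - 1, DLab.z b)
                  = ((i - 1) * (m : ZMod (n * m - m + 1)), DLab.z (!b)) := by
                simp [DSigma, hA, hv1, hq2']
              rw [hS1, hS2, hnoflip (!b) (by rw [hyval]; omega)]
              simp only [Prod.mk.injEq]
              exact ⟨by ring, by trivial⟩
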